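/- (Many atypical pebbles) Let k>1 and α∈(3/4,1] be such that k^{1−α} is an integer ≥2, let Δ be a cube of side k/2 partitioned into k^{3(1−α)} pebbles (axis-aligned cubes of side k^α/2), and let P be a finite configuration of pairwise non-intersecting plates with centers in Δ. Call a pebble atypical if it does not contain the centers of two plates of P with different orientations (so it is either empty or contains only plates of a single orientation). If P contains at least two plates of different types, then the number of atypical pebbles of Δ is at least k^{2(1−α)}/2. -/

import Mathlib

open MeasureTheory Filter

attribute [local instance] Classical.propDecidable

noncomputable section

/-! ## Basic geometry of hard plates -/

/-- a point of `ℝ³` -/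
abbrev Pt : Type := Fin 3 → ℝ

/-- an orientation: a type `i ∈ {1,2,3}` together with one of the two
assignments (`a` = `true`, `b` = `false`) of the sides `k^α` and `k`
to the two axes orthogonal to `i` -/
abbrev Orient : Type := Fin 3 × Bool

/-- a plate: a center together with an orientation -/
abbrev Plate : Type := Pt × Orient

/-- a block index in `ℤ³` -/
abbrev I3 : Type := Fin 3 → ℤ

/-- the side length, along the coordinate axis `j`, of a `1 × k^α × k` plate
with orientation `o`: side `1` along the axis `o.1`, and sides `k^α`, `k`
along the two other axes, in one of the two possible ways according to `o.2`. -/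
def sideLen (k α : ℝ) (o : Orient) (j : Fin 3) : ℝ :=
  if j = o.1 then 1
  else if j = o.1 + 1 then (if o.2 then k ^ α else k)
  else if o.2 then k else k ^ α

/-- the support `R_p` of a plate: the closed axis-aligned box centered at the
center of the plate, with side lengths `1, k^α, k` as prescribed by its orientation -/
def plSupport (k α : ℝ) (p : Plate) : Set Pt :=
  {y | ∀ j, |y j - p.1 j| ≤ sideLen k α p.2 j / 2}

/-- two plates intersect if their supports do -/
def Intersects (k α : ℝ) (p p' : Plate) : Prop :=
  (plSupport k α p ∩ plSupport k α p').Nonempty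

/-- hard-core pair interaction `φ(p,p')` -/
def phi2 (k α : ℝ) (p p' : Plate) : ℝ := if Intersects k α p p' then 0 else 1

/-- hard-core factor `φ(p_1,…,p_n) = ∏_{i<j} φ(p_i,p_j)` of a finite plate
configuration, given as a list -/
def phiL (k α : ℝ) : List Plate → ℝ
  | [] => 1
  | p :: ps => (ps.map (fun p' => phi2 k α p p')).prod * phiL k α ps

/-- hard-core interaction between two configurations -/
def crossL (k α : ℝ) (P Q : List Plate) : ℝ :=
  (P.map (fun p => (Q.map (fun p' => phi2 k α p p')).prod)).prod

/-- the plate configuration built from centers `x` and orientations `o` -/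
def mkConf {n : ℕ} (x : Fin n → Pt) (o : Fin n → Orient) : List Plate :=
  List.ofFn (fun m => (x m, o m))

/-- the Ursell function `φ^T(p_1,…,p_n)`: the sum over connected graphs on the
`n` labelled vertices (encoded by their edge sets, listed with `e.1 < e.2`) of
`∏_{{j,j'} ∈ E(g)} (φ(p_j,p_{j'}) - 1)`.  It equals `1` for `n = 1` and
vanishes for `n = 0`. -/
def ursell (k α : ℝ) {n : ℕ} (p : Fin n → Plate) : ℝ :=
  ∑ E : Finset (Fin n × Fin n),
    if (∀ e ∈ E, e.1 < e.2) ∧ (SimpleGraph.fromRel (fun i j => (i, j) ∈ E)).Connected then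
      ∏ e ∈ E, (phi2 k α (p e.1) (p e.2) - 1)
    else 0

/-- the two orientations of type `q` -/
def typeOrients (q : Fin 3) : Finset Orient := {(q, true), (q, false)}

/-! ## Partition functions of uniform systems -/

/-- grand-canonical partition function at activity `z` of plates with centers
in `S` and orientations in the finite set `O`:
`1 + ∑_{n≥1} (z^n/n!) ∫_{S^n} ∑_{orientations} φ(p_1,…,p_n)`
(the `n = 0` term of the series equals `1`). -/
def ZGen (k α z : ℝ) (S : Set Pt) (O : Finset Orient) : ℝ :=
  ∑' n : ℕ, (z ^ n / (Nat.factorial n : ℝ)) *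
    ∫ x : Fin n → Pt in Set.univ.pi (fun _ => S),
      ∑ o : Fin n → {a // a ∈ O}, phiL k α (mkConf x (fun m => (o m).1))

/-- partition function of plate configurations in `S` containing at least two
plates of different types -/
def Zge2 (k α z : ℝ) (S : Set Pt) : ℝ :=
  ∑' n : ℕ, (z ^ n / (Nat.factorial n : ℝ)) *
    ∫ x : Fin n → Pt in Set.univ.pi (fun _ => S),
      ∑ o : Fin n → Orient,
        (if ∃ i j : Fin n, (o i).1 ≠ (o j).1 then phiL k α (mkConf x o) else 0)

/-- the closed axis-aligned cube with center `c` and side `s` -/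
def cube (c : Pt) (s : ℝ) : Set Pt := {y | ∀ j, |y j - c j| ≤ s / 2}

/-- partition function of plate configurations with centers in `A ∪ B`, all
plates with center in `A` being of type `i` and all other plates of type `j` -/
def Zpair (k α z : ℝ) (i j : Fin 3) (A B : Set Pt) : ℝ :=
  ∑' n : ℕ, (z ^ n / (Nat.factorial n : ℝ)) *
    ∫ x : Fin n → Pt in Set.univ.pi (fun _ => A ∪ B),
      ∑ b : Fin n → Bool,
        phiL k α (mkConf x (fun m => ((if x m ∈ A then i else j), b m)))

/-- `Z^{≥2}(Δ₁ ∪ Δ₂)` for a dipole: sum over pairs of distinct types -/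
def Zdip (k α z : ℝ) (A B : Set Pt) : ℝ :=
  ∑ i : Fin 3, ∑ j : Fin 3, if i ≠ j then Zpair k α z i j A B else 0

/-! ## Pebbles -/

/-- the pebble with index `v` in the cube of corner `c` paved by cubes of
side `k^α/2` -/
def pebbleBox (k α : ℝ) {M : ℕ} (c : Pt) (v : Fin 3 → Fin M) : Set Pt :=
  {y | ∀ j, c j + (k ^ α / 2) * ((v j : ℕ) : ℝ) ≤ y j ∧
            y j ≤ c j + (k ^ α / 2) * (((v j : ℕ) : ℝ) + 1)}

/-- a pebble is typical of type `i` if it contains the centers of at least two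
plates of `P` of type `i` with different orientations -/
def TypicalIn (k α : ℝ) {M : ℕ} (c : Pt) (P : Finset Plate) (v : Fin 3 → Fin M)
    (i : Fin 3) : Prop :=
  ∃ p ∈ P, ∃ p' ∈ P, p.2 ≠ p'.2 ∧ p.2.1 = i ∧ p'.2.1 = i ∧
    p.1 ∈ pebbleBox k α c v ∧ p'.1 ∈ pebbleBox k α c v

/-- a pebble is atypical if it does not contain the centers of two plates of
`P` with different orientations -/
def AtypicalIn (k α : ℝ) {M : ℕ} (c : Pt) (P : Finset Plate) (v : Fin 3 → Fin M) : Prop :=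
  ¬ ∃ p ∈ P, ∃ p' ∈ P, p.2 ≠ p'.2 ∧ p.1 ∈ pebbleBox k α c v ∧ p'.1 ∈ pebbleBox k α c v

/-! ## Blocks, spins and conditioned partition functions -/

/-- the index of the (half-open) block of side `l` containing `x` -/
def blockIdx (l : ℝ) (x : Pt) : I3 := fun j => ⌊x j / l⌋

/-- the region of `ℝ³` paved by the blocks of side `ℓ = k/2` with indices in `B` -/
def regionOf (k : ℝ) (B : Finset I3) : Set Pt := {x | blockIdx (k / 2) x ∈ B}

/-- the closed region paved by the blocks with indices in `Y` -/
def regionClosed (k : ℝ) (Y : Finset I3) : Set Pt :=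
  {x | ∃ ξ ∈ Y, ∀ j, (k / 2) * (ξ j : ℝ) ≤ x j ∧ x j ≤ (k / 2) * ((ξ j : ℝ) + 1)}

/-- the block `ξ` is within rescaled `L^∞`-distance `r` of the complement of `B` -/
def nearBoundary (B : Finset I3) (r : ℤ) (ξ : I3) : Prop :=
  ∃ η : I3, η ∉ B ∧ ∀ j, |ξ j - η j| ≤ r

/-- the spin value (in `{0,1,2,3,4}`) corresponding to the plate type `i` -/
def spinOfType (i : Fin 3) : Fin 5 := ⟨i.1 + 1, by have := i.isLt; omega⟩

/-- the weight of the block `ξ` carrying the spin `s` in the presence of the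
plate configuration `P`: empty blocks get weight `1`, `-2`, `0` for
`s ∈ {1,2,3}`, `s = 0`, `s = 4` respectively, and nonempty blocks enforce the
compatibility of the plates they contain with the spin `s`. -/
def blockWeightL (l : ℝ) (P : List Plate) (ξ : I3) (s : Fin 5) : ℝ :=
  if ∀ p ∈ P, blockIdx l p.1 ≠ ξ then
    (if s = 0 then -2 else if s = 4 then 0 else 1)
  else if s = 4 then
    (if ∃ p ∈ P, ∃ p' ∈ P, blockIdx l p.1 = ξ ∧ blockIdx l p'.1 = ξ ∧ p.2.1 ≠ p'.2.1
     then 1 else 0)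
  else if ∃ i : Fin 3, s = spinOfType i ∧ ∀ p ∈ P, blockIdx l p.1 = ξ → p.2.1 = i
    then 1 else 0

/-- total compatibility weight of a plate configuration with a spin configuration -/
def confWeightL (l : ℝ) (B : Finset I3) (σ : I3 → Fin 5) (P : List Plate) : ℝ :=
  ∏ ξ ∈ B, blockWeightL l P ξ (σ ξ)

/-- extension (by `0`) of a spin configuration on `B` to all of `ℤ³` -/
def extFn (B : Finset I3) (σ : {ξ // ξ ∈ B} → Fin 5) : I3 → Fin 5 :=
  fun ξ => if h : ξ ∈ B then σ ⟨ξ, h⟩ else 0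

/-- indicator of the `q`-boundary condition: the spin equals `q` on every block
within rescaled `L^∞`-distance `8` of the complement of `B` -/
def bcWeight (B : Finset I3) (q : Fin 3) (σ : {ξ // ξ ∈ B} → Fin 5) : ℝ :=
  if ∀ ξ : {ξ // ξ ∈ B}, nearBoundary B 8 ξ.1 → σ ξ = spinOfType q then 1 else 0

/-- the partition function with `q`-boundary conditions on the union `Λ` of the
blocks indexed by `B`, with plate centers restricted to `Λ ∖ V` and with the
additional hard-core constraint that plates must not intersect the plates of
the fixed configuration `Pc`:
`Z = ∑_{σ ∈ Θ^q} ∫_{Ω_Λ(σ)} dP φ(P) z^{|P|} ∏_{p ∈ P, p' ∈ Pc} φ(p,p')`. -/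
def ZBCgen (k α z : ℝ) (B : Finset I3) (V : Set Pt) (q : Fin 3) (Pc : List Plate) : ℝ :=
  ∑ σ : {ξ // ξ ∈ B} → Fin 5,
    bcWeight B q σ *
      ∑' n : ℕ, (z ^ n / (Nat.factorial n : ℝ)) *
        ∫ x : Fin n → Pt in Set.univ.pi (fun _ => regionOf k B \ V),
          ∑ o : Fin n → Orient,
            confWeightL (k / 2) B (extFn B σ) (mkConf x o) * phiL k α (mkConf x o) *
              crossL k α (mkConf x o) Pc

/-- the `n`-point correlation function with `q`-boundary conditions,
`ρ_n^{(q,Λ)}(p_1,…,p_n) = Z(Λ|q)^{-1} ∑_{σ∈Θ^q} ∫_{Ω_Λ(σ)} dP z^{|P|+n} φ((p_1,…,p_n) ∪ P)` -/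
def corrBC (k α z : ℝ) (B : Finset I3) (V : Set Pt) (q : Fin 3) (Ps : List Plate) : ℝ :=
  (ZBCgen k α z B V q [])⁻¹ * z ^ Ps.length * phiL k α Ps * ZBCgen k α z B V q Ps

/-- an increasing sequence of cubic boxes invading `ℝ³`, each consisting of
`(8(m+1)-2)³` blocks (so that `L + 2ℓ` is divisible by `8ℓ`) -/
def boxB0 (m : ℕ) : Finset I3 :=
  Finset.Icc (fun _ => -(4 * (m : ℤ) + 3)) (fun _ => 4 * (m : ℤ) + 2)

/-- the cubic box with `(8m-2)³` blocks, aligned with the lattice of smoothing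
cubes (which exceed it by one block on each side) -/
def boxBm (m : ℕ) : Finset I3 :=
  Finset.Icc (fun _ => (-1 : ℤ)) (fun _ => 8 * (m : ℤ) - 4)

/-- `ε = max{(zk²)^{c₁}, e^{-c₂ z k^{2+α}}}` -/
def epsParam (k α z c1 c2 : ℝ) : ℝ :=
  max ((z * k ^ 2) ^ c1) (Real.exp (-(c2 * z * k ^ (2 + α))))

/-! ## Contours -/

/-- `D`-adjacency of blocks: distinct and touching on a face, an edge or a corner -/
def adjD (ξ η : I3) : Prop := ξ ≠ η ∧ ∀ j, |ξ j - η j| ≤ 1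

/-- reachability within a set of blocks through `D`-adjacency steps -/
def ReachIn (S : Finset I3) (ξ η : I3) : Prop :=
  Relation.ReflTransGen (fun a b => a ∈ S ∧ b ∈ S ∧ adjD a b) ξ η

/-- a nonempty `D`-connected set of blocks -/
def DConn (S : Finset I3) : Prop := S.Nonempty ∧ ∀ ξ ∈ S, ∀ η ∈ S, ReachIn S ξ η

/-- `Γ` is a `D`-connected component of `S` -/
def IsDComponent (S Γ : Finset I3) : Prop :=
  Γ ⊆ S ∧ DConn Γ ∧ ∀ ξ ∈ Γ, ∀ η ∈ S, adjD ξ η → η ∈ Γ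

/-- two sets of blocks are `D`-disconnected -/
def DDisj (A B : Finset I3) : Prop := ∀ ξ ∈ A, ∀ η ∈ B, ξ ≠ η ∧ ¬ adjD ξ η

/-- the combinatorial datum of a contour: its support (a set of blocks) and its
spin configuration (normalized to `0` outside the support) -/
structure Skeleton where
  Γ : Finset I3
  σ : I3 → Fin 5

/-- the blocks of the smoothing cube (of side `8ℓ`) with index `a` -/
def smoothBlocks (a : I3) : Finset I3 :=
  Finset.Icc (fun j => 8 * a j - 2) (fun j => 8 * a j + 5)

/-- the index of the smoothing cube containing the block `η` -/
def smoothIdx (η : I3) : I3 := fun j => Int.fdiv (η j + 2) 8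

/-- the sampling cube `S_ξ` (the `8` blocks `η` with `η j - ξ j ∈ {0,1}`) is
good: all its spins are equal and lie in `{1,2,3}` -/
def sampGood (B : Finset I3) (σ : I3 → Fin 5) (ξ : I3) : Prop :=
  ∃ i : Fin 3, ∀ η ∈ B, (∀ j, η j = ξ j ∨ η j = ξ j + 1) → σ η = spinOfType i

/-- the union `B(σ)` of the bad sampling cubes -/
def badBlocks (B : Finset I3) (σ : I3 → Fin 5) : Finset I3 :=
  B.filter (fun η => ∃ ξ ∈ B, ¬ sampGood B σ ξ ∧ ∀ j, η j = ξ j ∨ η j = ξ j + 1)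

/-- the union `B_s(σ)` of the smoothing cubes intersecting `B(σ)` -/
def smoothedBad (B : Finset I3) (σ : I3 → Fin 5) : Finset I3 :=
  (badBlocks B σ).biUnion (fun η => smoothBlocks (smoothIdx η))

/-- the bad region `B̄(σ)`: `B_s(σ)` together with all blocks at rescaled
`L^∞`-distance `≤ 1` from it -/
def barB (B : Finset I3) (σ : I3 → Fin 5) : Finset I3 :=
  B.filter (fun ξ => ∃ η ∈ smoothedBad B σ, ∀ j, |ξ j - η j| ≤ 1)

/-- the exterior of `Γ` in `B`: the blocks of `B ∖ Γ` connected to the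
boundary layer of `B` -/
def extBlocks (B Γ : Finset I3) : Finset I3 :=
  (B \ Γ).filter (fun ξ => ∃ η ∈ B \ Γ, nearBoundary B 1 η ∧ ReachIn (B \ Γ) ξ η)

/-- the interiors of `Γ` in `B`: the connected components of `B ∖ Γ` not
touching the boundary of `B` -/
def interiorsSet (B Γ : Finset I3) : Set (Finset I3) :=
  {A | IsDComponent (B \ Γ) A ∧ ∀ ξ ∈ A, ¬ nearBoundary B 1 ξ}

/-- the internal magnetization of the contour `s` on the interior `A`: the
common type prescribed by the spins of `s` on the layer of `Γ` adjacent to `A` -/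
def intMag (s : Skeleton) (A : Finset I3) : Fin 3 :=
  if h : ∃ i : Fin 3, ∀ ξ ∈ s.Γ, (∃ η ∈ A, adjD ξ η) → s.σ ξ = spinOfType i
  then h.choose else 0

/-- the external magnetization of the contour `s` is `q` -/
def extMagIs (B : Finset I3) (s : Skeleton) (q : Fin 3) : Prop :=
  ∀ ξ ∈ s.Γ, (∃ η ∈ extBlocks B s.Γ, adjD ξ η) → s.σ ξ = spinOfType q

/-- the skeleton `s` is a possible contour in `Λ` (associated to the block set
`B`) with `q`-boundary conditions: it arises from a spin configuration
`τ ∈ Θ^q` admitting a compatible plate configuration, as a `D`-connected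
component of the bad region `B̄(τ)`, with matching spins. -/
def PossibleSkel (k α : ℝ) (B : Finset I3) (q : Fin 3) (s : Skeleton) : Prop :=
  (∀ ξ, ξ ∉ s.Γ → s.σ ξ = 0) ∧
  ∃ τ : I3 → Fin 5,
    (∀ ξ ∈ B, nearBoundary B 8 ξ → τ ξ = spinOfType q) ∧
    (∃ P : List Plate, (∀ p ∈ P, p.1 ∈ regionOf k B) ∧
       confWeightL (k / 2) B τ P * phiL k α P ≠ 0) ∧
    IsDComponent (barB B τ) s.Γ ∧ (∀ ξ ∈ s.Γ, s.σ ξ = τ ξ)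

/-- the sub-configuration of the plates of `P` belonging to `Γ` -/
def restrictConf (l : ℝ) (Γ : Finset I3) (P : List Plate) : List Plate :=
  P.filter (fun p => decide (blockIdx l p.1 ∈ Γ))

/-- the function `F_γ(P)` for the contour with support `Γ` and plate
configuration `Pγ`: equal to `1` if `P` contains a plate belonging to `Λ ∖ Γ`
and a plate belonging to `Γ`, or a plate belonging to `Ext Γ` intersecting a
plate of `Pγ`; `0` otherwise. -/
def FgamL (k α : ℝ) (B Γ : Finset I3) (Pγ PQ : List Plate) : ℝ :=
  if (∃ p1 ∈ PQ, ∃ p2 ∈ PQ, blockIdx (k / 2) p1.1 ∉ Γ ∧ blockIdx (k / 2) p2.1 ∈ Γ) ∨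
     (∃ p1 ∈ PQ, blockIdx (k / 2) p1.1 ∈ extBlocks B Γ ∧ ∃ p2 ∈ Pγ, Intersects k α p1 p2)
  then 1 else 0

/-- `∫_{Ω^q_Λ} dP φ^T(P) z^{|P|} F_γ(P)`, the exponent of the dressing factor
of the contour activity -/
def dressInt (k α z : ℝ) (B : Finset I3) (q : Fin 3) (Γ : Finset I3) (Pγ : List Plate) : ℝ :=
  ∑' n : ℕ, (z ^ (n + 1) / (Nat.factorial (n + 1) : ℝ)) *
    ∫ x : Fin (n + 1) → Pt in Set.univ.pi (fun _ => regionOf k B),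
      ∑ b : Fin (n + 1) → Bool,
        ursell k α (fun m => (x m, (q, b m))) *
          FgamL k α B Γ Pγ (mkConf x (fun m => (q, b m)))

/-- the activity `ζ_q^{(Λ)}(γ)` of the contour `γ = (Γ, σ_γ, Pγ)`:
`(z^{|Pγ|} φ(Pγ)/Z^q(Γ)) ∏_j (Z^{(γ)}(Int_j Γ|m^j)/Z(Int_j Γ|q)) e^{-∫ φ^T z^{|P|} F_γ}` -/
def zetaL (k α z : ℝ) (B : Finset I3) (q : Fin 3) (s : Skeleton) (Pγ : List Plate) : ℝ :=
  (z ^ Pγ.length * phiL k α Pγ / ZGen k α z (regionOf k s.Γ) (typeOrients q)) *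
  (∏ᶠ A ∈ interiorsSet B s.Γ,
     ZBCgen k α z A ∅ (intMag s A) Pγ / ZBCgen k α z A ∅ q []) *
  Real.exp (-(dressInt k α z B q s.Γ Pγ))

/-- `∑_{n≥2} ((-1)^n/n!) ∑*_{γ_1,…,γ_n ∈ ∂ distinct} F_{γ_1}(P) ⋯ F_{γ_n}(P)`,
where the plate configuration of each contour is the restriction of `Pfull` to
its support -/
def multiF (k α : ℝ) (B : Finset I3) (D : Finset Skeleton) (Pfull Pq : List Plate) : ℝ :=
  ∑ r ∈ Finset.range (D.card + 1),
    if 2 ≤ r then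
      ((-1 : ℝ) ^ r / (Nat.factorial r : ℝ)) *
        ∑ g : Fin r → {s // s ∈ D},
          (if Function.Injective g then
            ∏ i : Fin r,
              FgamL k α B (g i).1.Γ (restrictConf (k / 2) (g i).1.Γ Pfull) Pq
          else 0)
    else 0

/-- the multi-contour interaction `W^{(Λ)}(∂)` -/
def Wfun (k α z : ℝ) (B : Finset I3) (q : Fin 3) (D : Finset Skeleton)
    (Pfull : List Plate) : ℝ :=
  ∑' n : ℕ, (z ^ (n + 1) / (Nat.factorial (n + 1) : ℝ)) *
    ∫ x : Fin (n + 1) → Pt in Set.univ.pi (fun _ => regionOf k B),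
      ∑ b : Fin (n + 1) → Bool,
        ursell k α (fun m => (x m, (q, b m))) *
          multiF k α B D Pfull (mkConf x (fun m => (q, b m)))

/-- a collection of possible contours, with pairwise `D`-disconnected supports,
all of whose external magnetizations equal `q` -/
def GoodContourConfig (k α : ℝ) (B : Finset I3) (q : Fin 3) (D : Finset Skeleton) : Prop :=
  (∀ s ∈ D, PossibleSkel k α B q s ∧ extMagIs B s q) ∧
  (∀ s ∈ D, ∀ t ∈ D, s ≠ t → DDisj s.Γ t.Γ)

/-- the sum `∑_{∂ ∈ C(Λ,q)} (∏_{γ∈∂} ζ_q^{(Λ)}(γ)) e^{W^{(Λ)}(∂)}` over contour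
configurations, the sum including the integration over the plate
configurations inside the contour supports -/
def contourSum (k α z : ℝ) (B : Finset I3) (q : Fin 3) : ℝ :=
  ∑ᶠ D ∈ {D : Finset Skeleton | D.Nonempty ∧ GoodContourConfig k α B q D},
    ∑' n : ℕ, (1 / (Nat.factorial n : ℝ)) *
      ∫ x : Fin n → Pt in Set.univ.pi (fun _ => regionOf k (D.biUnion Skeleton.Γ)),
        ∑ o : Fin n → Orient,
          (∏ s ∈ D,
            confWeightL (k / 2) s.Γ s.σ (restrictConf (k / 2) s.Γ (mkConf x o)) *
              zetaL k α z B q s (restrictConf (k / 2) s.Γ (mkConf x o))) *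
            Real.exp (Wfun k α z B q D (mkConf x o))

/-! ## Polymers -/

/-- the single-contour part `K_{q,1}^{(Λ)}(X)` of the polymer activity -/
def K1 (k α z : ℝ) (B : Finset I3) (q : Fin 3) (X : Finset I3) : ℝ :=
  ∑ᶠ s ∈ {s : Skeleton | PossibleSkel k α B q s ∧ extMagIs B s q ∧ s.Γ = X},
    ∑' n : ℕ, (1 / (Nat.factorial n : ℝ)) *
      ∫ x : Fin n → Pt in Set.univ.pi (fun _ => regionOf k X),
        ∑ o : Fin n → Orient,
          confWeightL (k / 2) X s.σ (mkConf x o) * zetaL k α z B q s (mkConf x o)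

/-- `𝕀_Y(P)`: `Y` is the smallest `D`-connected union of blocks containing the
supports of all plates of `P` -/
def IndY (k α : ℝ) (Y : Finset I3) (P : List Plate) : ℝ :=
  if DConn Y ∧ (∀ p ∈ P, plSupport k α p ⊆ regionClosed k Y) ∧
      (∀ Y' : Finset I3, Y' ⊆ Y → DConn Y' →
        (∀ p ∈ P, plSupport k α p ⊆ regionClosed k Y') → Y' = Y)
  then 1 else 0

/-- the localized multi-contour interaction `F_∂(Y)` -/
def Fcal (k α z : ℝ) (B : Finset I3) (q : Fin 3) (D : Finset Skeleton)
    (Pfull : List Plate) (Y : Finset I3) : ℝ :=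
  ∑' n : ℕ, (z ^ (n + 1) / (Nat.factorial (n + 1) : ℝ)) *
    ∫ x : Fin (n + 1) → Pt in Set.univ.pi (fun _ => regionOf k B),
      ∑ b : Fin (n + 1) → Bool,
        ursell k α (fun m => (x m, (q, b m))) *
          multiF k α B D Pfull (mkConf x (fun m => (q, b m))) *
          IndY k α Y (mkConf x (fun m => (q, b m)))

/-- `∑_{p≥1} (1/p!) ∑*_{Y_1,…,Y_p ∈ 𝔅^T(X) distinct, ∪Y_j = X₁} ∏_j (e^{F_∂(Y_j)} - 1)` -/
def Ysum (k α z : ℝ) (B : Finset I3) (q : Fin 3) (D : Finset Skeleton)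
    (X X1 : Finset I3) (Pfull : List Plate) : ℝ :=
  ∑' p : ℕ, (1 / (Nat.factorial (p + 1) : ℝ)) *
    ∑ Ys : Fin (p + 1) → {A // A ∈ X.powerset},
      (if Function.Injective Ys ∧ (∀ i, DConn (Ys i).1) ∧
          Finset.univ.sup (fun i => (Ys i).1) = X1
       then ∏ i, (Real.exp (Fcal k α z B q D Pfull (Ys i).1) - 1)
       else 0)

/-- the multi-contour part `K_{q,≥2}^{(Λ)}(X)` of the polymer activity -/
def Kge2 (k α z : ℝ) (B : Finset I3) (q : Fin 3) (X : Finset I3) : ℝ :=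
  ∑ X0 ∈ X.powerset, ∑ X1 ∈ X.powerset,
    (if X0 ∪ X1 = X then (1 : ℝ) else 0) *
      ∑ᶠ D ∈ {D : Finset Skeleton | 2 ≤ D.card ∧ GoodContourConfig k α B q D ∧
                D.biUnion Skeleton.Γ = X0},
        ∑' n : ℕ, (1 / (Nat.factorial n : ℝ)) *
          ∫ x : Fin n → Pt in Set.univ.pi (fun _ => regionOf k X0),
            ∑ o : Fin n → Orient,
              (∏ s ∈ D,
                confWeightL (k / 2) s.Γ s.σ (restrictConf (k / 2) s.Γ (mkConf x o)) *
                  zetaL k α z B q s (restrictConf (k / 2) s.Γ (mkConf x o))) *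
                Ysum k α z B q D X X1 (mkConf x o)

/-- the polymer activity `K_q^{(Λ)}(X) = K_{q,1}^{(Λ)}(X) + K_{q,≥2}^{(Λ)}(X)` -/
def Kpoly (k α z : ℝ) (B : Finset I3) (q : Fin 3) (X : Finset I3) : ℝ :=
  K1 k α z B q X + Kge2 k α z B q X

/-- the polymers of `Λ`: the nonempty `D`-connected unions of blocks of `B` -/
def polymers (B : Finset I3) : Finset (Finset I3) :=
  B.powerset.filter (fun A => DConn A)

/-- hard-core polymer interaction: `1` if `D`-disconnected, `0` otherwise -/
def polyPhi2 (A B : Finset I3) : ℝ := if DDisj A B then 1 else 0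

/-- the polymer Ursell function `φ^T(X_1,…,X_r)` -/
def polyUrsell {r : ℕ} (Xs : Fin r → Finset I3) : ℝ :=
  ∑ E : Finset (Fin r × Fin r),
    if (∀ e ∈ E, e.1 < e.2) ∧ (SimpleGraph.fromRel (fun i j => (i, j) ∈ E)).Connected then
      ∏ e ∈ E, (polyPhi2 (Xs e.1) (Xs e.2) - 1)
    else 0

/-- `∫_{Ω_Γ(σ_γ)} dP_γ |ζ_q^{(Λ)}(γ)|` -/
def contourAbsInt (k α z : ℝ) (B : Finset I3) (q : Fin 3) (s : Skeleton) : ℝ :=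
  ∑' n : ℕ, (1 / (Nat.factorial n : ℝ)) *
    ∫ x : Fin n → Pt in Set.univ.pi (fun _ => regionOf k s.Γ),
      ∑ o : Fin n → Orient,
        |confWeightL (k / 2) s.Γ s.σ (mkConf x o) * zetaL k α z B q s (mkConf x o)|

/-- `∫_{Ω_Γ(σ_γ)} dP_γ z^{|P_γ|} φ(P_γ) / Z^q(Γ)` -/
def contourPlateWeight (k α z : ℝ) (q : Fin 3) (s : Skeleton) : ℝ :=
  (∑' n : ℕ, (z ^ n / (Nat.factorial n : ℝ)) *
    ∫ x : Fin n → Pt in Set.univ.pi (fun _ => regionOf k s.Γ),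
      ∑ o : Fin n → Orient,
        confWeightL (k / 2) s.Γ s.σ (mkConf x o) * phiL k α (mkConf x o)) /
  ZGen k α z (regionOf k s.Γ) (typeOrients q)

/-- the admissible regions `𝔉nt`: connected regions obtained from a union of
smoothing cubes by removing all blocks at rescaled `L^∞`-distance `1` from the
complement -/
def Fnt : Set (Finset I3) :=
  {B | ∃ A : Finset I3, A.Nonempty ∧
        B = (A.biUnion smoothBlocks).filter
              (fun ξ => ¬ nearBoundary (A.biUnion smoothBlocks) 1 ξ) ∧
        DConn B}

/-- the one-point function of the pure type-`q` plate gas in `S`: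
`Z^q(S)^{-1} ∫_{Ω^q_S} dP z^{|P|+1} φ({p₀} ∪ P)` -/
def corrPure (k α z : ℝ) (S : Set Pt) (q : Fin 3) (p₀ : Plate) : ℝ :=
  (ZGen k α z S (typeOrients q))⁻¹ *
    ∑' n : ℕ, (z ^ (n + 1) / (Nat.factorial n : ℝ)) *
      ∫ x : Fin n → Pt in Set.univ.pi (fun _ => S),
        ∑ b : Fin n → Bool, phiL k α (p₀ :: mkConf x (fun m => (q, b m)))

end

/-!
With `M = k^{1-α}`, a plate's long side spans `M` pebbles. Two non-intersecting plates of
different types are separated along an axis on which both are short, and inside typical pebbles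
the orientations can be chosen so as to force that axis. Hence typical pebbles of different types
differ in every coordinate and are at distance `≥ 2` along the axis orthogonal to neither type,
while a single plate of another type excludes a whole slab of typical pebbles of type `i`.
Counting through coordinate projections, at most `M³ - M²` pebbles are typical: if some type has
no typical pebble, the others miss a common slab; otherwise every projection of the typical
pebbles of one type misses the projections of the other two, hence has at most `M - 2` elements.
-/

open Finset

def longAxis (o : Orient) : Fin 3 := if o.2 then o.1 + 2 else o.1 + 1

section Orientations

variable {k α : ℝ}

lemma sideLen_longAxis (o : Orient) : sideLen k α o (longAxis o) = k := by
  obtain ⟨i, _ | _⟩ := o <;> fin_cases i <;> simp [sideLen, longAxis]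

lemma one_le_sideLen (h1 : 1 ≤ k ^ α) (h2 : k ^ α ≤ k) (o : Orient) (a : Fin 3) :
    1 ≤ sideLen k α o a := by
  unfold sideLen
  split_ifs <;> linarith

lemma rpow_le_sideLen (h2 : k ^ α ≤ k) {o : Orient} {a : Fin 3} (ha : a ≠ o.1) :
    k ^ α ≤ sideLen k α o a := by
  unfold sideLen
  split_ifs <;> first | contradiction | exact le_rfl | exact h2

lemma one_add_rpow_le_sideLen_add (h1 : 1 ≤ k ^ α) (h2 : k ^ α ≤ k) {o o' : Orient}
    (hoo : o.1 ≠ o'.1) (a : Fin 3) :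
    1 + k ^ α ≤ sideLen k α o a + sideLen k α o' a := by
  by_cases ha : a = o.1
  · linarith [one_le_sideLen h1 h2 o a, rpow_le_sideLen h2 (o := o') (ha ▸ hoo)]
  · linarith [one_le_sideLen h1 h2 o' a, rpow_le_sideLen h2 ha]

lemma exists_longAxis_cover {i j : Fin 3} (hij : i ≠ j) (a : Fin 3) :
    ∃ b b' : Bool, ∀ a' ≠ a, a' = longAxis (i, b) ∨ a' = longAxis (j, b') := by
  revert i j a
  decide

lemma exists_longAxis_cover_of_ne {i : Fin 3} {o : Orient} (hi : i ≠ o.1) :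
    ∃ (b : Bool) (a : Fin 3), ∀ a' ≠ a, a' = longAxis (i, b) ∨ a' = longAxis o := by
  obtain ⟨j, b'⟩ := o
  revert i j b'
  decide

end Orientations

section Geometry

variable {k α : ℝ} {M : ℕ} {c : Pt} {p p' : Plate} {v w : Fin 3 → Fin M}

lemma sideLen_nonneg (hk : 0 ≤ k) (o : Orient) (a : Fin 3) : 0 ≤ sideLen k α o a := by
  have := Real.rpow_nonneg hk α
  unfold sideLen
  split_ifs <;> positivity

lemma intersects_of_forall_abs_sub_le (hk : 0 ≤ k)
    (h : ∀ j, |p.1 j - p'.1 j| ≤ (sideLen k α p.2 j + sideLen k α p'.2 j) / 2) :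
    Intersects k α p p' := by
  refine ⟨fun j => max (p.1 j - sideLen k α p.2 j / 2) (p'.1 j - sideLen k α p'.2 j / 2),
    fun j => ?_, fun j => ?_⟩ <;>
  · have hj := abs_le.1 (h j)
    have := sideLen_nonneg hk p.2 j (α := α)
    have := sideLen_nonneg hk p'.2 j (α := α)
    rw [abs_le]
    constructor <;> cases max_cases (p.1 j - sideLen k α p.2 j / 2)
      (p'.1 j - sideLen k α p'.2 j / 2) <;> linarith

lemma abs_sub_le_of_mem_pebbleBox (hk : 0 ≤ k) {x y : Pt} (hx : x ∈ pebbleBox k α c v)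
    (hy : y ∈ pebbleBox k α c w) (a : Fin 3) :
    |x a - y a| ≤ (|(v a : ℝ) - w a| + 1) * (k ^ α / 2) := by
  have := Real.rpow_nonneg hk α
  obtain ⟨hx₁, hx₂⟩ := hx a
  obtain ⟨hy₁, hy₂⟩ := hy a
  have := le_abs_self ((v a : ℝ) - w a)
  have := neg_abs_le ((v a : ℝ) - w a)
  rw [abs_le]
  constructor <;> nlinarith

lemma abs_sub_add_one_le (s t : Fin M) : |(s : ℝ) - t| + 1 ≤ M := by
  have hs : (s : ℝ) + 1 ≤ M := by exact_mod_cast s.isLt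
  have ht : (t : ℝ) + 1 ≤ M := by exact_mod_cast t.isLt
  rw [← le_sub_iff_add_le, abs_le]
  constructor <;> linarith [(s : ℕ).cast_nonneg (α := ℝ), (t : ℕ).cast_nonneg (α := ℝ)]

lemma exists_sideLen_add_lt_of_not_intersects (hk : 0 ≤ k) (hp : ¬ Intersects k α p p')
    (hv : p.1 ∈ pebbleBox k α c v) (hw : p'.1 ∈ pebbleBox k α c w) :
    ∃ a, sideLen k α p.2 a + sideLen k α p'.2 a < (|(v a : ℝ) - w a| + 1) * k ^ α := by
  by_contra! h
  refine hp (intersects_of_forall_abs_sub_le hk fun j => ?_)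
  linarith [abs_sub_le_of_mem_pebbleBox hk hv hw j, h j]

lemma exists_coord_ne_of_not_intersects (h1 : 1 ≤ k ^ α) (h2 : k ^ α ≤ k)
    (hp : ¬ Intersects k α p p') (hpp' : p.2.1 ≠ p'.2.1)
    (hv : p.1 ∈ pebbleBox k α c v) (hw : p'.1 ∈ pebbleBox k α c w) : ∃ a, v a ≠ w a := by
  obtain ⟨a, ha⟩ := exists_sideLen_add_lt_of_not_intersects (by linarith) hp hv hw
  refine ⟨a, fun heq => ?_⟩
  rw [heq, sub_self, abs_zero, zero_add, one_mul] at ha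
  linarith [one_add_rpow_le_sideLen_add h1 h2 hpp' a]

/-- Plates whose sides along an axis add up to more than `k = M k^α` cannot be separated along
that axis, so the separating axis must be `a`. -/
lemma coord_sep_of_longAxis_cover (h1 : 1 ≤ k ^ α) (h2 : k ^ α ≤ k) (hMk : M * k ^ α = k)
    (hp : ¬ Intersects k α p p') (hpp' : p.2.1 ≠ p'.2.1)
    (hv : p.1 ∈ pebbleBox k α c v) (hw : p'.1 ∈ pebbleBox k α c w) {a : Fin 3}
    (hcover : ∀ a' ≠ a, a' = longAxis p.2 ∨ a' = longAxis p'.2) :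
    v a ≠ w a ∧ (a ≠ p.2.1 → a ≠ p'.2.1 → 1 < |(v a : ℝ) - w a|) := by
  have hka : 0 < k ^ α := by linarith
  obtain ⟨a', ha'⟩ := exists_sideLen_add_lt_of_not_intersects (by linarith) hp hv hw
  have hle_k : (|(v a' : ℝ) - w a'| + 1) * k ^ α ≤ k :=
    (mul_le_mul_of_nonneg_right (abs_sub_add_one_le _ _) hka.le).trans hMk.le
  obtain rfl : a' = a := by
    by_contra hne
    rcases hcover a' hne with rfl | rfl
    · linarith [sideLen_longAxis (k := k) (α := α) p.2, one_le_sideLen h1 h2 p'.2 (longAxis p.2)]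
    · linarith [sideLen_longAxis (k := k) (α := α) p'.2, one_le_sideLen h1 h2 p.2 (longAxis p'.2)]
  refine ⟨fun heq => ?_, fun ha ha' => ?_⟩
  · rw [heq, sub_self, abs_zero, zero_add, one_mul] at ha'
    linarith [one_add_rpow_le_sideLen_add h1 h2 hpp' a']
  · have := rpow_le_sideLen h2 ha
    have := rpow_le_sideLen h2 ha'
    nlinarith

lemma exists_nat_le_le_add_one {r : ℝ} (hM : 0 < M) (h0 : 0 ≤ r) (hr : r ≤ M) :
    ∃ n < M, (n : ℝ) ≤ r ∧ r ≤ n + 1 := by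
  by_cases hfl : ⌊r⌋₊ < M
  · exact ⟨⌊r⌋₊, hfl, Nat.floor_le h0, (Nat.lt_floor_add_one r).le⟩
  · have hMr : (M : ℝ) ≤ r := (Nat.le_floor_iff h0).1 (not_lt.1 hfl)
    refine ⟨M - 1, by omega, ?_, ?_⟩ <;> rw [Nat.cast_sub (by omega)] <;> push_cast <;> linarith

lemma exists_mem_pebbleBox (hM : 0 < M) (h1 : 1 ≤ k ^ α) (hMk : M * k ^ α = k) {y : Pt}
    (hy : ∀ a, c a ≤ y a ∧ y a ≤ c a + k / 2) :
    ∃ w : Fin 3 → Fin M, y ∈ pebbleBox k α c w := by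
  have hh : 0 < k ^ α / 2 := by linarith
  choose n hn hmem using fun a => exists_nat_le_le_add_one hM
    (r := (y a - c a) / (k ^ α / 2)) (div_nonneg (by linarith [hy a]) hh.le)
    (by rw [div_le_iff₀ hh]; linarith [hy a])
  refine ⟨fun a => ⟨n a, hn a⟩, fun a => ?_⟩
  obtain ⟨hlo, hhi⟩ := hmem a
  rw [le_div_iff₀ hh] at hlo
  rw [div_le_iff₀ hh] at hhi
  constructor <;> linarith

end Geometry

section Pebbles

variable {k α : ℝ} {M : ℕ} {c : Pt} {P : Finset Plate} {v w : Fin 3 → Fin M} {i j : Fin 3}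

lemma TypicalIn.exists_mem (h : TypicalIn k α c P v i) (b : Bool) :
    ∃ x, (x, (i, b)) ∈ P ∧ x ∈ pebbleBox k α c v := by
  obtain ⟨⟨x, _, b₁⟩, hx, ⟨y, _, b₂⟩, hy, hne, rfl, rfl, hxv, hyv⟩ := h
  by_cases hb : b = b₁
  · exact ⟨x, hb ▸ hx, hxv⟩
  · obtain rfl : b = b₂ := by
      revert hb hne
      cases b <;> cases b₁ <;> cases b₂ <;> simp
    exact ⟨y, hy, hyv⟩

variable (h1 : 1 ≤ k ^ α) (h2 : k ^ α ≤ k)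
  (hP : (P : Set Plate).Pairwise fun p p' => ¬ Intersects k α p p')

include h1 h2 hP

lemma exists_typicalIn_of_not_atypicalIn (h : ¬ AtypicalIn k α c P v) :
    ∃ i, TypicalIn k α c P v i := by
  rw [AtypicalIn, not_not] at h
  obtain ⟨p, hp, p', hp', hne, hv, hv'⟩ := h
  have htype : p.2.1 = p'.2.1 := by
    by_contra hpp'
    obtain ⟨a, ha⟩ := exists_coord_ne_of_not_intersects h1 h2
      (hP hp hp' fun h => hne (h ▸ rfl)) hpp' hv hv'
    exact ha rfl
  exact ⟨p.2.1, p, hp, p', hp', hne, rfl, htype.symm, hv, hv'⟩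

variable (hMk : M * k ^ α = k)
include hMk

lemma TypicalIn.coord_sep (hv : TypicalIn k α c P v i) (hw : TypicalIn k α c P w j)
    (hij : i ≠ j) (a : Fin 3) :
    v a ≠ w a ∧ (a ≠ i → a ≠ j → 1 < |(v a : ℝ) - w a|) := by
  obtain ⟨b, b', hcover⟩ := exists_longAxis_cover hij a
  obtain ⟨x, hx, hxv⟩ := hv.exists_mem b
  obtain ⟨y, hy, hyw⟩ := hw.exists_mem b'
  exact coord_sep_of_longAxis_cover h1 h2 hMk
    (hP hx hy fun h => hij (congrArg (·.2.1) h)) hij hxv hyw hcover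

lemma exists_slab_not_typicalIn {p : Plate} (hp : p ∈ P)
    (hpΔ : ∀ a, c a ≤ p.1 a ∧ p.1 a ≤ c a + k / 2) (hi : i ≠ p.2.1) :
    ∃ (a : Fin 3) (s : Fin M), ∀ v : Fin 3 → Fin M, TypicalIn k α c P v i → v a ≠ s := by
  obtain ⟨w, hw⟩ := exists_mem_pebbleBox (M := M) (Nat.pos_of_ne_zero fun h0 => by
    simp [h0] at hMk; linarith) h1 hMk hpΔ
  obtain ⟨b, a, hcover⟩ := exists_longAxis_cover_of_ne hi
  refine ⟨a, w a, fun v hv => ?_⟩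
  obtain ⟨x, hx, hxv⟩ := hv.exists_mem b
  exact (coord_sep_of_longAxis_cover (p := (x, (i, b))) h1 h2 hMk
    (hP hx hp fun h => hi (congrArg (·.2.1) h)) hi hxv hw hcover).1

end Pebbles

section Counting

lemma card_le_prod_card_image {ι κ : Type*} [Fintype ι] [DecidableEq ι] [DecidableEq κ]
    (S : Finset (ι → κ)) : #S ≤ ∏ i, #(S.image (· i)) := by
  have hsub : S ⊆ Fintype.piFinset fun i => S.image (· i) := fun f hf =>
    Fintype.mem_piFinset.2 fun i => mem_image_of_mem _ hf
  exact (card_le_card hsub).trans_eq (Fintype.card_piFinset _)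

lemma card_add_pow_le_of_forall_ne {ι κ : Type*} [Fintype ι] [DecidableEq ι] [Fintype κ]
    [DecidableEq κ] {S : Finset (ι → κ)} {i : ι} {x : κ} (h : ∀ f ∈ S, f i ≠ x) :
    #S + Fintype.card κ ^ (Fintype.card ι - 1) ≤ Fintype.card κ ^ Fintype.card ι := by
  have hslab : #(univ.filter fun f : ι → κ => f i = x) = Fintype.card κ ^ (Fintype.card ι - 1) := by
    simpa using Fintype.card_filter_piFinset_const_eq_of_mem (univ : Finset κ) i (mem_univ x)
  have hdisj : Disjoint S (univ.filter fun f : ι → κ => f i = x) :=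
    disjoint_left.2 fun f hf hfx => h f hf (mem_filter.1 hfx).2
  rw [← hslab, ← card_union_of_disjoint hdisj, ← Fintype.card_fun]
  exact card_le_univ _

/-- If `C ∪ D` covered `Fin M`, membership in `C` would propagate along consecutive elements. -/
lemma exists_not_mem_of_one_lt_abs_sub {M : ℕ} {C D : Finset (Fin M)} (hC : C.Nonempty)
    (hD : D.Nonempty) (h : ∀ x ∈ C, ∀ y ∈ D, 1 < |(x : ℝ) - y|) : ∃ s, s ∉ C ∧ s ∉ D := by
  by_contra! hcov
  have step : ∀ m (hm : m + 1 < M), (⟨m, by omega⟩ : Fin M) ∈ C ↔ ⟨m + 1, hm⟩ ∈ C := by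
    intro m hm
    have h₁ : ¬ 1 < |(m : ℝ) - (m + 1 : ℕ)| := by push_cast; norm_num
    have h₂ : ¬ 1 < |((m + 1 : ℕ) : ℝ) - m| := by push_cast; norm_num
    exact ⟨fun hmC => by_contra fun hC' => h₁ (h _ hmC _ (hcov _ hC')),
      fun hC' => by_contra fun hmC => h₂ (h _ hC' _ (hcov _ hmC))⟩
  have hconst : ∀ n (hn : n < M), (⟨n, hn⟩ : Fin M) ∈ C ↔ (⟨0, by omega⟩ : Fin M) ∈ C := by
    intro n
    induction n with
    | zero => exact fun _ => Iff.rfl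
    | succ m ih => exact fun hn => (step m hn).symm.trans (ih _)
  obtain ⟨x, hx⟩ := hC
  obtain ⟨y, hy⟩ := hD
  have hyC : y ∈ C := (hconst y y.2).2 ((hconst x x.2).1 hx)
  exact absurd (h y hyC y hy) (by simp)

variable {M : ℕ} {T : Fin 3 → Finset (Fin 3 → Fin M)}

lemma card_biUnion_add_sq_le_of_nonempty
    (hne : ∀ i j, i ≠ j → ∀ v ∈ T i, ∀ w ∈ T j, ∀ a, v a ≠ w a) (hT : ∀ t, (T t).Nonempty) :
    #(univ.biUnion T) + M ^ 2 ≤ M ^ 3 := by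
  set q : Fin 3 → Fin 3 → ℕ := fun t a => #((T t).image (· a))
  have hsum : ∀ a, ∑ t, q t a ≤ M := by
    intro a
    rw [← card_biUnion]
    · simpa using card_le_univ (univ.biUnion fun t => (T t).image (· a))
    · intro t _ t' _ htt'
      refine disjoint_left.2 fun s hs hs' => ?_
      obtain ⟨v, hv, rfl⟩ := mem_image.1 hs
      obtain ⟨w, hw, hvw⟩ := mem_image.1 hs'
      exact hne t t' htt' v hv w hw a hvw.symm
  have hq : ∀ t a, q t a + 2 ≤ M := by
    intro t a
    have hpos : ∀ t, 1 ≤ q t a := fun t => card_pos.2 ((hT t).image _)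
    have := hsum a
    rw [Fin.sum_univ_three] at this
    have := hpos 0; have := hpos 1; have := hpos 2
    fin_cases t <;> simp only [Fin.zero_eta, Fin.mk_one, Fin.reduceFinMk] <;> omega
  obtain ⟨n, rfl⟩ : ∃ n, M = n + 2 := ⟨M - 2, by have := hq 0 0; omega⟩
  have hT_le : ∀ t, #(T t) ≤ q t 0 * n * n := fun t => by
    have := card_le_prod_card_image (T t)
    rw [Fin.prod_univ_three] at this
    exact this.trans (Nat.mul_le_mul (Nat.mul_le_mul_left _ (by linarith [hq t 1]))
      (by linarith [hq t 2]))
  have hunion : #(univ.biUnion T) ≤ (n + 2) * n * n := calc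
    #(univ.biUnion T) ≤ ∑ t, #(T t) := card_biUnion_le
    _ ≤ ∑ t, q t 0 * n * n := sum_le_sum fun t _ => hT_le t
    _ = (∑ t, q t 0) * n * n := by rw [sum_mul, sum_mul]
    _ ≤ (n + 2) * n * n := by gcongr; exact hsum 0
  nlinarith

lemma exists_slab_of_not_nonempty
    (hgap : ∀ i j, i ≠ j → ∀ v ∈ T i, ∀ w ∈ T j, ∀ a, a ≠ i → a ≠ j → 1 < |(v a : ℝ) - w a|)
    (hslab : ∀ i, ∃ a s, ∀ v ∈ T i, v a ≠ s) {t : Fin 3} (ht : ¬ (T t).Nonempty) :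
    ∃ a s, ∀ u, ∀ v ∈ T u, v a ≠ s := by
  obtain ⟨i, j, hij, hit, hjt, hcov⟩ := (by decide : ∀ t : Fin 3,
    ∃ i j, i ≠ j ∧ i ≠ t ∧ j ≠ t ∧ ∀ u, u = t ∨ u = i ∨ u = j) t
  have only_in (i' : Fin 3) (hi' : ∀ u ≠ i', ¬ (T u).Nonempty) :
      ∃ a s, ∀ u, ∀ v ∈ T u, v a ≠ s := by
    obtain ⟨a, s, hs⟩ := hslab i'
    refine ⟨a, s, fun u v hv => ?_⟩
    by_cases hu : u = i'
    · subst hu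
      exact hs v hv
    · exact absurd ⟨v, hv⟩ (hi' u hu)
  by_cases hi : (T i).Nonempty
  · by_cases hj : (T j).Nonempty
    · obtain ⟨s, hsi, hsj⟩ := exists_not_mem_of_one_lt_abs_sub (hi.image (· t)) (hj.image (· t))
        (by
          simp only [mem_image]
          rintro _ ⟨v, hv, rfl⟩ _ ⟨w, hw, rfl⟩
          exact hgap i j hij v hv w hw t hit.symm hjt.symm)
      refine ⟨t, s, fun u v hv => ?_⟩
      rcases hcov u with rfl | rfl | rfl
      · exact absurd ⟨v, hv⟩ ht
      · exact fun hvs => hsi (hvs ▸ mem_image_of_mem _ hv)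
      · exact fun hvs => hsj (hvs ▸ mem_image_of_mem _ hv)
    · exact only_in i fun u hu => by rcases hcov u with rfl | rfl | rfl <;> simp_all
  · exact only_in j fun u hu => by rcases hcov u with rfl | rfl | rfl <;> simp_all

theorem card_biUnion_add_sq_le
    (hne : ∀ i j, i ≠ j → ∀ v ∈ T i, ∀ w ∈ T j, ∀ a, v a ≠ w a)
    (hgap : ∀ i j, i ≠ j → ∀ v ∈ T i, ∀ w ∈ T j, ∀ a, a ≠ i → a ≠ j → 1 < |(v a : ℝ) - w a|)
    (hslab : ∀ i, ∃ a s, ∀ v ∈ T i, v a ≠ s) :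
    #(univ.biUnion T) + M ^ 2 ≤ M ^ 3 := by
  by_cases hall : ∀ t, (T t).Nonempty
  · exact card_biUnion_add_sq_le_of_nonempty hne hall
  obtain ⟨t, ht⟩ := not_forall.1 hall
  obtain ⟨a, s, hs⟩ := exists_slab_of_not_nonempty hgap hslab ht
  simpa using card_add_pow_le_of_forall_ne (S := univ.biUnion T) (i := a) (x := s)
    fun f hf => by
      obtain ⟨u, -, hu⟩ := mem_biUnion.1 hf
      exact hs u f hu

end Counting

theorem sq_le_card_atypicalIn {k α : ℝ} {M : ℕ} {c : Pt} {P : Finset Plate}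
    (h1 : 1 ≤ k ^ α) (h2 : k ^ α ≤ k) (hMk : M * k ^ α = k)
    (hP : (P : Set Plate).Pairwise fun p p' => ¬ Intersects k α p p')
    (hΔ : ∀ p ∈ P, ∀ j, c j ≤ p.1 j ∧ p.1 j ≤ c j + k / 2)
    (htypes : ∃ p ∈ P, ∃ p' ∈ P, p.2.1 ≠ p'.2.1) :
    M ^ 2 ≤ #(univ.filter fun v : Fin 3 → Fin M => AtypicalIn k α c P v) := by
  set T : Fin 3 → Finset (Fin 3 → Fin M) := fun i => univ.filter (TypicalIn k α c P · i)
  have hT : #(univ.biUnion T) + M ^ 2 ≤ M ^ 3 := by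
    refine card_biUnion_add_sq_le (fun i j hij v hv w hw a => ?_)
      (fun i j hij v hv w hw a => ?_) fun i => ?_
    · exact ((mem_filter.1 hv).2.coord_sep h1 h2 hP hMk (mem_filter.1 hw).2 hij a).1
    · exact ((mem_filter.1 hv).2.coord_sep h1 h2 hP hMk (mem_filter.1 hw).2 hij a).2
    · obtain ⟨p, hp, p', hp', hpp'⟩ := htypes
      obtain ⟨q, hq, hi⟩ : ∃ q ∈ P, i ≠ q.2.1 := by
        by_cases h : i = p.2.1
        · exact ⟨p', hp', h ▸ hpp'⟩
        · exact ⟨p, hp, h⟩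
      obtain ⟨a, s, hs⟩ := exists_slab_not_typicalIn h1 h2 hP hMk hq (hΔ q hq) hi
      exact ⟨a, s, fun v hv => hs v (mem_filter.1 hv).2⟩
  have hcover : univ ⊆ (univ.filter fun v => AtypicalIn k α c P v) ∪ univ.biUnion T := by
    intro v _
    by_cases hv : AtypicalIn k α c P v
    · exact mem_union_left _ (mem_filter.2 ⟨mem_univ _, hv⟩)
    · obtain ⟨i, hi⟩ := exists_typicalIn_of_not_atypicalIn h1 h2 hP hv
      exact mem_union_right _ (mem_biUnion.2 ⟨i, mem_univ _, mem_filter.2 ⟨mem_univ _, hi⟩⟩)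
  have := (card_le_card hcover).trans (card_union_le _ _)
  simp only [card_univ, Fintype.card_fun, Fintype.card_fin] at this
  omega

/-- **Many atypical pebbles.**  Let `k^{1-α} = M` be an integer `≥ 2` and let
`Δ` be the cube of corner `c` and side `k/2`, partitioned into the `M³` pebbles
of side `k^α/2`.  If a configuration `P` of pairwise non-intersecting plates
with centers in `Δ` contains at least two plates of different types, then at
least `k^{2(1-α)}/2` of the pebbles are atypical. -/
theorem many_atypical_pebbles :
    ∀ k α : ℝ, 1 < k → α ∈ Set.Ioc (3/4 : ℝ) 1 →
    ∀ M : ℕ, 2 ≤ M → (M : ℝ) = k ^ (1 - α) →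
    ∀ c : Pt, ∀ P : Finset Plate,
      (∀ p ∈ P, ∀ p' ∈ P, p ≠ p' → ¬ Intersects k α p p') →
      (∀ p ∈ P, ∀ j, c j ≤ p.1 j ∧ p.1 j ≤ c j + k / 2) →
      (∃ p ∈ P, ∃ p' ∈ P, p.2.1 ≠ p'.2.1) →
      k ^ (2 * (1 - α)) / 2 ≤
        ((Finset.univ.filter (fun v : Fin 3 → Fin M => AtypicalIn k α c P v)).card : ℝ) := by
  intro k α hk hα M _ hMα c P hP hΔ htypes
  have h1 : 1 ≤ k ^ α := Real.one_le_rpow hk.le (by linarith [hα.1])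
  have h2 : k ^ α ≤ k := by simpa using Real.rpow_le_rpow_of_exponent_le hk.le hα.2
  have hMk : (M : ℝ) * k ^ α = k := by
    rw [hMα, ← Real.rpow_add (by linarith)]
    norm_num
  have hsq : k ^ (2 * (1 - α)) = (M : ℝ) ^ 2 := by
    rw [mul_comm, Real.rpow_mul (by linarith), ← hMα]
    norm_num
  have hcard : ((M ^ 2 : ℕ) : ℝ) ≤ _ := Nat.cast_le.2 (sq_le_card_atypicalIn h1 h2 hMk hP hΔ htypes)
  rw [hsq]
  push_cast at hcard
  linarith [sq_nonneg (M : ℝ)]
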